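/- With the partition construction of G and B: Σ_{S : S induces a forest of G, E_r ⊆ S, and |S ∩ E_ℓ| = n} det(B_S) = Σ_{S ∈ 𝒞} det(A_S). -/

import Mathlib

open scoped Classical

/-- The principal minor of `A` on the index set `S` (equal to `1` when `S = ∅`). -/
noncomputable def principalMinor {ι : Type*} [DecidableEq ι]
    (A : Matrix ι ι ℝ) (S : Finset ι) : ℝ :=
  (A.submatrix (fun i : ↥S => (i : ι)) (fun i : ↥S => (i : ι))).det

/-- The edge of the graph `G` associated with an edge index in `Fin m ⊕ Fin m`:
the left edge `{v_{g j}, w_{g j, j}}` and the right edge `{w_{g j, j}, v_{g j + 1}}`. -/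
def partEdge {n m : ℕ} (g : Fin m → Fin n) : (Fin m ⊕ Fin m) → Sym2 (Fin (n + 1) ⊕ Fin m)
  | Sum.inl j => s(Sum.inl (g j).castSucc, Sum.inr j)
  | Sum.inr j => s(Sum.inr j, Sum.inl (g j).succ)

/-- The spanning subgraph of `G` whose edges are those indexed by `S ⊆ Fin m ⊕ Fin m`. -/
def partSubgraph {n m : ℕ} (g : Fin m → Fin n) (S : Finset (Fin m ⊕ Fin m)) :
    SimpleGraph (Fin (n + 1) ⊕ Fin m) :=
  SimpleGraph.fromEdgeSet (partEdge g '' ↑S)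

/-- The matrix `B` of the construction: the left-left block is `A`, the right-right block is
the identity, and the off-diagonal blocks vanish. -/
def matB {m : ℕ} (A : Matrix (Fin m) (Fin m) ℝ) :
    Matrix (Fin m ⊕ Fin m) (Fin m ⊕ Fin m) ℝ :=
  Matrix.of fun p q =>
    match p, q with
    | Sum.inl j₁, Sum.inl j₂ => A j₁ j₂
    | Sum.inr j, Sum.inr j' => if j = j' then 1 else 0
    | _, _ => 0

/-- The set `E_ℓ` of left edge indices. -/
def leftIdx (m : ℕ) : Finset (Fin m ⊕ Fin m) := Finset.univ.image Sum.inl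

/-- The set `E_r` of right edge indices. -/
def rightIdx (m : ℕ) : Finset (Fin m ⊕ Fin m) := Finset.univ.image Sum.inr

/-!
Every `S` in the left-hand sum contains all right edges, so it is determined by the set
`T = S.toLeft` of its left edges, and `B_S` is block diagonal with blocks `A_T` and `1`, so
`det B_S = det A_T`. With all right edges present, two left edges in a common fiber close a
4-cycle; conversely, if `T` meets each fiber at most once, every vertex has at most one neighbour
of larger potential (`v_i ↦ 2i`, `w_j ↦ 2 g(j) + 1`), which rules out cycles. Hence `S` is a
forest with `n` left edges exactly when `T` is a transversal of the fibers.
-/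

namespace SimpleGraph

variable {V : Type*} {G : SimpleGraph V}

/-- On a cycle, the vertex of minimal potential has two distinct cycle neighbours, both of
larger potential. -/
theorem isAcyclic_of_adj_lt_eq {α : Type*} [LinearOrder α] (f : V → α)
    (hne : ∀ a b, G.Adj a b → f a ≠ f b)
    (hup : ∀ a b c, G.Adj a b → G.Adj a c → f a < f b → f a < f c → b = c) :
    G.IsAcyclic := by
  intro v c hc
  obtain ⟨u, hu, hmin⟩ := c.support.toFinset.exists_min_image f ⟨v, by simp⟩
  rw [List.mem_toFinset] at hu
  have hc' : (c.rotate u hu).IsCycle := hc.rotate hu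
  have hnil := hc'.not_nil
  have hlt : ∀ i, G.Adj u ((c.rotate u hu).getVert i) → f u < f ((c.rotate u hu).getVert i) :=
    fun i hadj => (hmin _ (List.mem_toFinset.2 ((c.mem_support_rotate_iff u hu).1
      ((c.rotate u hu).getVert_mem_support i)))).lt_of_ne (hne _ _ hadj)
  have hsnd : G.Adj u (c.rotate u hu).snd := (c.rotate u hu).adj_snd hnil
  have hpen : G.Adj u (c.rotate u hu).penultimate := ((c.rotate u hu).adj_penultimate hnil).symm
  exact hc'.snd_ne_penultimate (hup _ _ _ hsnd hpen (hlt _ hsnd) (hlt _ hpen))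

theorem isAcyclic_fromEdgeSet_image_of_injOn {ι α : Type*} [LinearOrder α] (f : V → α)
    (low high : ι → V) {s : Set ι} (hlt : ∀ x ∈ s, f (low x) < f (high x))
    (hinj : s.InjOn low) :
    (fromEdgeSet ((fun x => s(low x, high x)) '' s)).IsAcyclic := by
  have edge_of_adj : ∀ {a b}, (fromEdgeSet ((fun x => s(low x, high x)) '' s)).Adj a b →
      ∃ x ∈ s, (a = low x ∧ b = high x) ∨ (a = high x ∧ b = low x) := by
    intro a b hab
    obtain ⟨⟨x, hx, hxab⟩, -⟩ := (fromEdgeSet_adj _).1 hab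
    exact ⟨x, hx, by simpa [Sym2.eq_iff, eq_comm] using hxab⟩
  refine isAcyclic_of_adj_lt_eq f (fun a b hab => ?_) (fun a b c hab hac hb hc => ?_)
  · obtain ⟨x, hx, ⟨rfl, rfl⟩ | ⟨rfl, rfl⟩⟩ := edge_of_adj hab
    exacts [(hlt x hx).ne, (hlt x hx).ne']
  · obtain ⟨x, hx, ⟨rfl, rfl⟩ | ⟨rfl, rfl⟩⟩ := edge_of_adj hab
    · obtain ⟨y, hy, ⟨hxy, rfl⟩ | ⟨hxy, rfl⟩⟩ := edge_of_adj hac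
      · rw [hinj hx hy hxy]
      · rw [hxy] at hc
        exact absurd (hlt y hy) hc.not_gt
    · exact absurd (hlt x hx) hb.not_gt

end SimpleGraph

section PrincipalMinor

variable {ι κ : Type*} [DecidableEq ι] [DecidableEq κ]

theorem principalMinor_fromBlocks_zero₂₁ (A : Matrix ι ι ℝ) (B : Matrix ι κ ℝ)
    (D : Matrix κ κ ℝ) (s : Finset ι) (t : Finset κ) :
    principalMinor (Matrix.fromBlocks A B 0 D) (s.disjSum t)
      = principalMinor A s * principalMinor D t := by
  let e : ↥s ⊕ ↥t ≃ ↥(s.disjSum t) :=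
    ((Equiv.subtypeEquivRight (by simp)).sumCongr (Equiv.subtypeEquivRight (by simp))).trans
      Equiv.subtypeSum.symm
  rw [principalMinor, principalMinor, principalMinor, ← Matrix.det_submatrix_equiv_self e,
    ← Matrix.det_fromBlocks_zero₂₁ _ (B.submatrix Subtype.val Subtype.val)]
  congr 1
  ext (i | i) (j | j) <;> rfl

theorem principalMinor_one (t : Finset κ) : principalMinor (1 : Matrix κ κ ℝ) t = 1 := by
  rw [principalMinor, Matrix.submatrix_one _ Subtype.val_injective, Matrix.det_one]

end PrincipalMinor

theorem Finset.forall_existsUnique_mem_and_eq_iff {α β : Type*} [Fintype β] [DecidableEq β]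
    (g : α → β) (T : Finset α) :
    (∀ i, ∃! j, j ∈ T ∧ g j = i) ↔ Set.InjOn g T ∧ T.card = Fintype.card β := by
  constructor
  · intro hT
    have hinj : Set.InjOn g T := fun j hj j' hj' hjj' =>
      (hT (g j)).unique ⟨hj, rfl⟩ ⟨hj', hjj'.symm⟩
    refine ⟨hinj, ?_⟩
    rw [← card_image_of_injOn hinj, ← card_univ]
    congr 1
    exact eq_univ_of_forall fun i => by
      obtain ⟨j, hj, -⟩ := hT i
      exact mem_image.2 ⟨j, hj⟩
  · rintro ⟨hinj, hcard⟩ i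
    have himage : T.image g = univ :=
      eq_univ_of_card _ (by rw [card_image_of_injOn hinj, hcard])
    obtain ⟨j, hj, rfl⟩ := mem_image.1 (himage ▸ mem_univ i)
    exact ⟨j, ⟨hj, rfl⟩, fun j' ⟨hj', hjj'⟩ => hinj hj' hj hjj'⟩

section PartitionGraph

variable {n m : ℕ} (g : Fin m → Fin n)

def partLow : Fin m ⊕ Fin m → Fin (n + 1) ⊕ Fin m :=
  Sum.elim (fun j => Sum.inl (g j).castSucc) Sum.inr

def partHigh : Fin m ⊕ Fin m → Fin (n + 1) ⊕ Fin m :=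
  Sum.elim Sum.inr (fun j => Sum.inl (g j).succ)

def partPotential : Fin (n + 1) ⊕ Fin m → ℕ :=
  Sum.elim (fun i => 2 * i.val) (fun j => 2 * (g j).val + 1)

theorem partPotential_partLow_lt_partHigh (x : Fin m ⊕ Fin m) :
    partPotential g (partLow g x) < partPotential g (partHigh g x) := by
  cases x <;> simp only [partPotential, partLow, partHigh, Sum.elim_inl, Sum.elim_inr,
    Fin.val_castSucc, Fin.val_succ] <;> omega

theorem partSubgraph_eq_fromEdgeSet (S : Finset (Fin m ⊕ Fin m)) :
    partSubgraph g S = SimpleGraph.fromEdgeSet ((fun x => s(partLow g x, partHigh g x)) '' S) := by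
  have hedge : partEdge g = fun x => s(partLow g x, partHigh g x) := by
    funext x
    cases x <;> rfl
  rw [partSubgraph, hedge]

theorem partSubgraph_adj_of_mem {S : Finset (Fin m ⊕ Fin m)} {x : Fin m ⊕ Fin m} (hx : x ∈ S) :
    (partSubgraph g S).Adj (partLow g x) (partHigh g x) := by
  rw [partSubgraph_eq_fromEdgeSet, SimpleGraph.fromEdgeSet_adj]
  exact ⟨⟨x, hx, rfl⟩, fun h => (partPotential_partLow_lt_partHigh g x).ne (congrArg _ h)⟩

theorem isAcyclic_partSubgraph_disjSum {T : Finset (Fin m)} (hT : Set.InjOn g T)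
    (t : Finset (Fin m)) : (partSubgraph g (T.disjSum t)).IsAcyclic := by
  rw [partSubgraph_eq_fromEdgeSet]
  refine SimpleGraph.isAcyclic_fromEdgeSet_image_of_injOn (partPotential g) _ _
    (fun x _ => partPotential_partLow_lt_partHigh g x) ?_
  rintro (j | j) hj (j' | j') hj' h <;>
    simp_all [partLow, hT.eq_iff, Fin.castSucc_inj]

/-- Two left edges `j ≠ j'` in the fiber over `i` give the two paths `v_i, w_j, v_{i+1}` and
`v_i, w_{j'}, v_{i+1}`. -/
theorem injOn_of_isAcyclic_partSubgraph_disjSum_univ {T : Finset (Fin m)}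
    (h : (partSubgraph g (T.disjSum Finset.univ)).IsAcyclic) : Set.InjOn g T := by
  intro j hj j' hj' hgj
  set G := partSubgraph g (T.disjSum Finset.univ)
  have hleft (k : Fin m) (hk : k ∈ T) : G.Adj (Sum.inl (g k).castSucc) (Sum.inr k) :=
    partSubgraph_adj_of_mem g (x := Sum.inl k) (by simpa)
  have hright (k : Fin m) : G.Adj (Sum.inr k) (Sum.inl (g k).succ) :=
    partSubgraph_adj_of_mem g (x := Sum.inr k) (by simp)
  let path (k : Fin m) (hk : k ∈ T) (hgk : g k = g j) :
      G.Path (Sum.inl (g j).castSucc) (Sum.inl (g j).succ) :=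
    ⟨.cons (hgk ▸ hleft k hk) (.cons (hgk ▸ hright k) .nil), by
      simp [SimpleGraph.Walk.cons_isPath_iff, Fin.castSucc_lt_succ.ne]⟩
  have := congrArg (fun p => p.1.support)
    ((h.subsingleton_path _ _).elim (path j hj rfl) (path j' hj' hgj.symm))
  simpa [path] using this

end PartitionGraph

section Indices

variable {m : ℕ}

theorem toLeft_disjSum_univ_of_rightIdx_subset {S : Finset (Fin m ⊕ Fin m)}
    (h : rightIdx m ⊆ S) : S.toLeft.disjSum Finset.univ = S := by
  ext (j | j) <;> simp [h (Finset.mem_image_of_mem Sum.inr (Finset.mem_univ j))]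

theorem rightIdx_subset_disjSum_univ (T : Finset (Fin m)) :
    rightIdx m ⊆ T.disjSum Finset.univ := by
  simp [rightIdx, Finset.subset_iff]

theorem card_inter_leftIdx (S : Finset (Fin m ⊕ Fin m)) :
    (S ∩ leftIdx m).card = S.toLeft.card := by
  have hinter : S ∩ leftIdx m = S.toLeft.map Function.Embedding.inl := by
    ext (j | j) <;> simp [leftIdx]
  rw [hinter, Finset.card_map]

theorem matB_eq_fromBlocks (A : Matrix (Fin m) (Fin m) ℝ) :
    matB A = Matrix.fromBlocks A 0 0 1 := by
  ext (j | j) (j' | j') <;> simp [matB, Matrix.one_apply]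

end Indices

theorem principalMinor_matB_disjSum {m : ℕ} (A : Matrix (Fin m) (Fin m) ℝ)
    (T t : Finset (Fin m)) : principalMinor (matB A) (T.disjSum t) = principalMinor A T := by
  rw [matB_eq_fromBlocks, principalMinor_fromBlocks_zero₂₁, principalMinor_one, mul_one]

theorem isAcyclic_partSubgraph_and_rightIdx_subset_and_card_iff {n m : ℕ}
    (g : Fin m → Fin n) (S : Finset (Fin m ⊕ Fin m)) :
    ((partSubgraph g S).IsAcyclic ∧ rightIdx m ⊆ S ∧ (S ∩ leftIdx m).card = n) ↔
      (Set.InjOn g S.toLeft ∧ S.toLeft.card = n) ∧ S.toLeft.disjSum Finset.univ = S := by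
  constructor
  · rintro ⟨hacyclic, hright, hcard⟩
    have hS := toLeft_disjSum_univ_of_rightIdx_subset hright
    rw [← hS] at hacyclic
    exact ⟨⟨injOn_of_isAcyclic_partSubgraph_disjSum_univ g hacyclic,
      card_inter_leftIdx S ▸ hcard⟩, hS⟩
  · rintro ⟨⟨hinj, hcard⟩, hS⟩
    rw [← hS]
    exact ⟨isAcyclic_partSubgraph_disjSum g hinj _, rightIdx_subset_disjSum_univ _,
      by rw [card_inter_leftIdx, Finset.toLeft_disjSum, hcard]⟩

theorem part_sum_forests_eq_sum_transversals_general {n m : ℕ}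
    (g : Fin m → Fin n)
    (A : Matrix (Fin m) (Fin m) ℝ) :
    ∑ S ∈ Finset.univ.filter (fun S : Finset (Fin m ⊕ Fin m) =>
        (partSubgraph g S).IsAcyclic ∧ rightIdx m ⊆ S ∧ (S ∩ leftIdx m).card = n),
      principalMinor (matB A) S
    = ∑ T ∈ Finset.univ.filter (fun T : Finset (Fin m) =>
        ∀ i : Fin n, ∃! j : Fin m, j ∈ T ∧ g j = i),
      principalMinor A T := by
  simp only [isAcyclic_partSubgraph_and_rightIdx_subset_and_card_iff,
    Finset.forall_existsUnique_mem_and_eq_iff, Fintype.card_fin]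
  refine Finset.sum_nbij' Finset.toLeft (·.disjSum Finset.univ) (fun S hS => by simp_all)
    (fun T hT => by simp_all) (fun S hS => by simp_all) (fun T _ => Finset.toLeft_disjSum)
    (fun S hS => ?_)
  rw [Finset.mem_filter] at hS
  conv_lhs => rw [← hS.2.2]
  exact principalMinor_matB_disjSum A _ _

/-- For the partition construction: the sum of `det (B_S)` over all `S` inducing a forest of
`G`, containing `E_r`, and with `|S ∩ E_ℓ| = n`, equals the sum of `det (A_T)` over all
`T ∈ 𝒞`, the subsets of `Fin m` meeting every fiber `P_i = g⁻¹(i)` in exactly one element. -/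
theorem part_sum_forests_eq_sum_transversals {n m : ℕ} (hn : 1 ≤ n) (hm : 1 ≤ m)
    (g : Fin m → Fin n) (hg : Function.Surjective g)
    (A : Matrix (Fin m) (Fin m) ℝ) (hA : A.PosSemidef) :
    ∑ S ∈ Finset.univ.filter (fun S : Finset (Fin m ⊕ Fin m) =>
        (partSubgraph g S).IsAcyclic ∧ rightIdx m ⊆ S ∧ (S ∩ leftIdx m).card = n),
      principalMinor (matB A) S
    = ∑ T ∈ Finset.univ.filter (fun T : Finset (Fin m) =>
        ∀ i : Fin n, ∃! j : Fin m, j ∈ T ∧ g j = i),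
      principalMinor A T :=
  part_sum_forests_eq_sum_transversals_general g A
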